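/- arXiv:math/0406141 — 13 statements merged into one kernel-verified Lean document; each statement's English description precedes it below -/
import Mathlib

section
/- Let I ⊆ ℝ be an open interval, v : I → ℂ, E, ν ∈ ℂ, and let f : I → ℂ be twice differentiable and nowhere vanishing, satisfying f(x)²·(E − v(x)) + (1/2)·f(x)·f''(x) − (1/4)·f'(x)² = −ν² at every point of I. Then u := f'/(2f) + ν/f satisfies the Riccati equation u' + u² = v − E on I; consequently, every differentiable Λ : I → ℂ with Λ' = u·Λ satisfies Λ'' = (v − E)·Λ, i.e. −Λ'' + v·Λ = E·Λ. -/
/-- If `f` is twice differentiable, nowhere vanishing, and satisfies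
`f² (E - v) + (1/2) f f'' - (1/4) (f')² = -ν²` on an open interval, then
`u := f'/(2f) + ν/f` satisfies the Riccati equation `u' + u² = v - E`; consequently
every differentiable `Λ` with `Λ' = u Λ` satisfies `Λ'' = (v - E) Λ`. -/
theorem riccati_from_constant_of_integration
    (a b : ℝ) (v : ℝ → ℂ) (E ν : ℂ)
    (f f' f'' : ℝ → ℂ)
    (hf : ∀ x ∈ Set.Ioo a b, HasDerivAt f (f' x) x)
    (hf' : ∀ x ∈ Set.Ioo a b, HasDerivAt f' (f'' x) x)
    (hne : ∀ x ∈ Set.Ioo a b, f x ≠ 0)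
    (hF : ∀ x ∈ Set.Ioo a b,
      (f x) ^ 2 * (E - v x) + (1/2) * f x * f'' x - (1/4) * (f' x) ^ 2 = -ν ^ 2) :
    (∀ x ∈ Set.Ioo a b,
      HasDerivAt (fun t => f' t / (2 * f t) + ν / f t)
        (v x - E - (f' x / (2 * f x) + ν / f x) ^ 2) x) ∧
    (∀ Λ Λ' : ℝ → ℂ,
      (∀ x ∈ Set.Ioo a b,
        HasDerivAt Λ (Λ' x) x ∧ Λ' x = (f' x / (2 * f x) + ν / f x) * Λ x) →
      ∀ x ∈ Set.Ioo a b, HasDerivAt Λ' ((v x - E) * Λ x) x) := by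
  have hu : ∀ x ∈ Set.Ioo a b,
      HasDerivAt (fun t => f' t / (2 * f t) + ν / f t)
        (v x - E - (f' x / (2 * f x) + ν / f x) ^ 2) x := by
    intro x hx
    have hfx := hne x hx
    have h2fx : (2 : ℂ) * f x ≠ 0 := mul_ne_zero two_ne_zero hfx
    have h1 : HasDerivAt (fun t => f' t / (2 * f t))
        ((f'' x * (2 * f x) - f' x * (2 * f' x)) / (2 * f x) ^ 2) x :=
      (hf' x hx).div ((hf x hx).const_mul 2) h2fx
    have h2 : HasDerivAt (fun t => ν / f t)
        ((0 * f x - ν * f' x) / (f x) ^ 2) x :=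
      (hasDerivAt_const x ν).div (hf x hx) hfx
    have h := h1.add h2
    refine h.congr_deriv ?_
    symm
    have hFx := hF x hx
    field_simp
    ring_nf
    ring_nf at hFx
    linear_combination (-4) * hFx
  refine ⟨hu, ?_⟩
  intro Λ Λ' hΛ x hx
  have hx' : Set.Ioo a b ∈ nhds x := isOpen_Ioo.mem_nhds hx
  have heq : Λ' =ᶠ[nhds x] fun t => (f' t / (2 * f t) + ν / f t) * Λ t :=
    Filter.eventuallyEq_of_mem hx' (fun t ht => (hΛ t ht).2)
  have h : HasDerivAt (fun t => (f' t / (2 * f t) + ν / f t) * Λ t)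
      ((v x - E - (f' x / (2 * f x) + ν / f x) ^ 2) * Λ x
        + (f' x / (2 * f x) + ν / f x) * Λ' x) x :=
    (hu x hx).mul (hΛ x hx).1
  have h' := h.congr_of_eventuallyEq heq
  refine h'.congr_deriv ?_
  symm
  rw [(hΛ x hx).2]
  ring
end

section
/- For all complex numbers a, b, z the polynomial identity (2z³ − b)³ − 27a(2z³ − b)(z² − a)² + 27b(z² − a)³ = (z³ − 3az + b)²·(8z³ − 6az − b) holds. Equivalently, if z² ≠ a and y := (2z³ − b)/(3(z² − a)), then 27(z² − a)³·(y³ − 3ay + b) = (z³ − 3az + b)²·(8z³ − 6az − b). -/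
/-- The polynomial identity underlying Hermite's reduction, and its equivalent
formulation via the substitution `y = (2z³ - b)/(3(z² - a))`. -/
theorem hermite_polynomial_identity :
    (∀ a b z : ℂ,
      (2 * z ^ 3 - b) ^ 3 - 27 * a * (2 * z ^ 3 - b) * (z ^ 2 - a) ^ 2
          + 27 * b * (z ^ 2 - a) ^ 3
        = (z ^ 3 - 3 * a * z + b) ^ 2 * (8 * z ^ 3 - 6 * a * z - b)) ∧
    (∀ a b z : ℂ, z ^ 2 ≠ a →
      27 * (z ^ 2 - a) ^ 3 *
          (((2 * z ^ 3 - b) / (3 * (z ^ 2 - a))) ^ 3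
            - 3 * a * ((2 * z ^ 3 - b) / (3 * (z ^ 2 - a))) + b)
        = (z ^ 3 - 3 * a * z + b) ^ 2 * (8 * z ^ 3 - 6 * a * z - b)) := by
  have h1 : ∀ a b z : ℂ,
      (2 * z ^ 3 - b) ^ 3 - 27 * a * (2 * z ^ 3 - b) * (z ^ 2 - a) ^ 2
          + 27 * b * (z ^ 2 - a) ^ 3
        = (z ^ 3 - 3 * a * z + b) ^ 2 * (8 * z ^ 3 - 6 * a * z - b) := by
    intro a b z; ring
  refine ⟨h1, fun a b z hz => ?_⟩
  have hne : (3 : ℂ) * (z ^ 2 - a) ≠ 0 := by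
    intro h
    apply hz
    have : z ^ 2 - a = 0 := by
      rcases mul_eq_zero.1 h with h' | h'
      · norm_num at h'
      · exact h'
    linear_combination this
  rw [← h1 a b z]
  field_simp
  ring
end

section
/- Let a, b ∈ ℝ and let z₀ ≤ z₁ be real numbers such that for every z in the interval [z₀, z₁] one has z² − a > 0, 8z³ − 6az − b > 0, and z³ − 3az + b > 0. Define y(z) := (2z³ − b)/(3(z² − a)). Then ∫_{z₀}^{z₁} z/√((z² − a)(8z³ − 6az − b)) dz = (1/(2√3)) · ∫_{y(z₀)}^{y(z₁)} dt/√(t³ − 3at + b) (Hermite's reduction of a hyperelliptic integral of the first kind to an elliptic integral of the first kind). -/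
/-- Hermite's reduction of a hyperelliptic integral of the first kind to an elliptic
integral of the first kind, via the substitution `y = (2z³ - b)/(3(z² - a))`. -/
theorem hermite_reduction_first_kind (a b z₀ z₁ : ℝ) (hle : z₀ ≤ z₁)
    (hpos : ∀ z ∈ Set.Icc z₀ z₁,
      z ^ 2 - a > 0 ∧ 8 * z ^ 3 - 6 * a * z - b > 0 ∧ z ^ 3 - 3 * a * z + b > 0) :
    ∫ z in z₀..z₁, z / Real.sqrt ((z ^ 2 - a) * (8 * z ^ 3 - 6 * a * z - b)) =
      (1 / (2 * Real.sqrt 3)) *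
        ∫ t in ((2 * z₀ ^ 3 - b) / (3 * (z₀ ^ 2 - a)))..
                ((2 * z₁ ^ 3 - b) / (3 * (z₁ ^ 2 - a))),
          1 / Real.sqrt (t ^ 3 - 3 * a * t + b) := by
  set Y : ℝ → ℝ := fun z => (2 * z ^ 3 - b) / (3 * (z ^ 2 - a)) with hY
  set Y' : ℝ → ℝ := fun z => 2 * z * (z ^ 3 - 3 * a * z + b) / (3 * (z ^ 2 - a) ^ 2) with hY'
  have huIcc : Set.uIcc z₀ z₁ = Set.Icc z₀ z₁ := Set.uIcc_of_le hle
  -- key algebraic identity, after the substitution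
  have hiden : ∀ z : ℝ, z ^ 2 - a ≠ 0 →
      Y z ^ 3 - 3 * a * Y z + b =
        (z ^ 3 - 3 * a * z + b) ^ 2 * (8 * z ^ 3 - 6 * a * z - b) / (27 * (z ^ 2 - a) ^ 3) := by
    intro z hz
    simp only [hY]
    field_simp
    ring
  have hpos' : ∀ z ∈ Set.Icc z₀ z₁, Y z ^ 3 - 3 * a * Y z + b > 0 := by
    intro z hz
    obtain ⟨h1, h2, h3⟩ := hpos z hz
    rw [hiden z (ne_of_gt h1)]
    positivity
  -- derivative of Y
  have hderiv : ∀ z ∈ Set.uIcc z₀ z₁, HasDerivAt Y (Y' z) z := by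
    intro z hz
    rw [huIcc] at hz
    have h1 := (hpos z hz).1
    have h1' : (3 : ℝ) * (z ^ 2 - a) ≠ 0 := by positivity
    have hnum : HasDerivAt (fun z : ℝ => 2 * z ^ 3 - b) (2 * (3 * z ^ 2)) z := by
      simpa using ((hasDerivAt_pow 3 z).const_mul 2).sub_const b
    have hden : HasDerivAt (fun z : ℝ => 3 * (z ^ 2 - a)) (3 * (2 * z)) z := by
      simpa using (((hasDerivAt_pow 2 z).sub_const a).const_mul 3)
    have := hnum.div hden h1'
    refine HasDerivAt.congr_deriv this ?_
    simp only [hY']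
    field_simp
    ring
  have hcontY' : ContinuousOn Y' (Set.uIcc z₀ z₁) := by
    rw [huIcc]
    apply ContinuousOn.div
    · fun_prop
    · fun_prop
    · intro z hz
      have h1 := (hpos z hz).1
      positivity
  have hcontg : ContinuousOn (fun t => 1 / Real.sqrt (t ^ 3 - 3 * a * t + b))
      (Y '' Set.uIcc z₀ z₁) := by
    apply ContinuousOn.div continuousOn_const
    · fun_prop
    · rintro t ⟨z, hz, rfl⟩
      rw [huIcc] at hz
      exact ne_of_gt (Real.sqrt_pos.mpr (hpos' z hz))
  have hsub := intervalIntegral.integral_comp_smul_deriv' hderiv hcontY' hcontg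
  rw [← hsub]
  rw [← intervalIntegral.integral_const_mul]
  apply intervalIntegral.integral_congr
  intro z hz
  rw [huIcc] at hz
  obtain ⟨h1, h2, h3⟩ := hpos z hz
  have hs1 : Real.sqrt (z ^ 2 - a) > 0 := Real.sqrt_pos.mpr h1
  have hs2 : Real.sqrt (8 * z ^ 3 - 6 * a * z - b) > 0 := Real.sqrt_pos.mpr h2
  have hs3 : Real.sqrt 3 > 0 := Real.sqrt_pos.mpr (by norm_num)
  have hq1 : Real.sqrt (z ^ 2 - a) ^ 2 = z ^ 2 - a := Real.sq_sqrt h1.le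
  have hq2 : Real.sqrt (8 * z ^ 3 - 6 * a * z - b) ^ 2 = 8 * z ^ 3 - 6 * a * z - b :=
    Real.sq_sqrt h2.le
  have hq3 : Real.sqrt 3 ^ 2 = 3 := Real.sq_sqrt (by norm_num)
  -- compute the sqrt of the cubic in Y z
  have hsqY : Real.sqrt (Y z ^ 3 - 3 * a * Y z + b) =
      (z ^ 3 - 3 * a * z + b) * Real.sqrt (8 * z ^ 3 - 6 * a * z - b) /
        (3 * Real.sqrt 3 * (z ^ 2 - a) * Real.sqrt (z ^ 2 - a)) := by
    rw [hiden z (ne_of_gt h1)]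
    rw [show ((z ^ 3 - 3 * a * z + b) ^ 2 * (8 * z ^ 3 - 6 * a * z - b) /
        (27 * (z ^ 2 - a) ^ 3)) =
        ((z ^ 3 - 3 * a * z + b) * Real.sqrt (8 * z ^ 3 - 6 * a * z - b) /
        (3 * Real.sqrt 3 * (z ^ 2 - a) * Real.sqrt (z ^ 2 - a))) ^ 2 by
      rw [div_pow, mul_pow, mul_pow, mul_pow, mul_pow, hq1, hq2, hq3]
      ring]
    apply Real.sqrt_sq
    positivity
  simp only [smul_eq_mul, Function.comp_apply, hsqY, hY']
  rw [Real.sqrt_mul h1.le]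
  field_simp
  rw [hq1, mul_div_mul_right _ _ (ne_of_gt (by linarith : z * (z ^ 2 - a * 3) + b > 0))]
end

section
/- Let a, b ∈ ℝ and let z₀ ≤ z₁ be real numbers such that for every z in the interval [z₀, z₁] one has z² − a > 0, 8z³ − 6az − b > 0, and z³ − 3az + b > 0. Define y(z) := (2z³ − b)/(3(z² − a)). Then ∫_{z₀}^{z₁} (2z² − a)/√((z² − a)(8z³ − 6az − b)) dz − (1/3)·(√((8z₁³ − 6az₁ − b)/(z₁² − a)) − √((8z₀³ − 6az₀ − b)/(z₀² − a))) = (1/(2√3)) · ∫_{y(z₀)}^{y(z₁)} t/√(t³ − 3at + b) dt (reduction of a hyperelliptic integral of the second kind to an elliptic integral of the second kind). -/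
/-- Derivative of the boundary function `H(z) = (1/3)√((8z³-6az-b)/(z²-a))`. -/
lemma hermite_auxB (a b z : ℝ) (hQ : z ^ 2 - a > 0) (hP : 8 * z ^ 3 - 6 * a * z - b > 0) :
    HasDerivAt (fun z => (1/3) * Real.sqrt ((8 * z ^ 3 - 6 * a * z - b) / (z ^ 2 - a)))
      ((4 * z ^ 4 - 9 * a * z ^ 2 + b * z + 3 * a ^ 2) /
        (3 * ((z ^ 2 - a) * Real.sqrt (z ^ 2 - a)) * Real.sqrt (8 * z ^ 3 - 6 * a * z - b))) z := by
  have hQ' : z ^ 2 - a ≠ 0 := ne_of_gt hQ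
  have hu : HasDerivAt (fun z : ℝ => 8 * z ^ 3 - 6 * a * z - b) (24 * z ^ 2 - 6 * a) z := by
    have h := (((hasDerivAt_pow 3 z).const_mul 8).sub
      ((hasDerivAt_id z).const_mul (6 * a))).sub_const b
    have e : (24 * z ^ 2 - 6 * a) = 8 * (3 * z ^ 2) - 6 * a := by ring
    rw [e]; simpa using h
  have hv : HasDerivAt (fun z : ℝ => z ^ 2 - a) (2 * z) z := by
    simpa using (hasDerivAt_pow 2 z).sub_const a
  have hdiv := hu.div hv hQ'
  have hfrac : (8 * z ^ 3 - 6 * a * z - b) / (z ^ 2 - a) ≠ 0 :=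
    ne_of_gt (div_pos hP hQ)
  have key := (hdiv.sqrt hfrac).const_mul (1/3 : ℝ)
  convert key using 1
  · rfl
  · rfl
  · rfl
  have hsQ : Real.sqrt (z ^ 2 - a) > 0 := Real.sqrt_pos.2 hQ
  have hsP : Real.sqrt (8 * z ^ 3 - 6 * a * z - b) > 0 := Real.sqrt_pos.2 hP
  have e1 : Real.sqrt ((8 * z ^ 3 - 6 * a * z - b) / (z ^ 2 - a))
      = Real.sqrt (8 * z ^ 3 - 6 * a * z - b) / Real.sqrt (z ^ 2 - a) :=
    Real.sqrt_div hP.le _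
  simp only [Pi.div_apply]
  rw [e1]
  set sq := Real.sqrt (z ^ 2 - a) with hsq
  set sp := Real.sqrt (8 * z ^ 3 - 6 * a * z - b) with hsp
  have e2 : sq ^ 2 = z ^ 2 - a := Real.sq_sqrt hQ.le
  field_simp
  linear_combination (-((24*z^2-6*a)*(z^2-a)-(8*z^3-6*a*z-b)*(2*z))) * e2

/-- Derivative of the substitution `y(z) = (2z³-b)/(3(z²-a))`. -/
lemma hermite_auxY (a b z : ℝ) (hQ : z ^ 2 - a > 0) :
    HasDerivAt (fun z => (2 * z ^ 3 - b) / (3 * (z ^ 2 - a)))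
      (2 * z * (z ^ 3 - 3 * a * z + b) / (3 * (z ^ 2 - a) ^ 2)) z := by
  have hQ' : (3 : ℝ) * (z ^ 2 - a) ≠ 0 := by positivity
  have hu : HasDerivAt (fun z : ℝ => 2 * z ^ 3 - b) (6 * z ^ 2) z := by
    have h := ((hasDerivAt_pow 3 z).const_mul 2).sub_const b
    have e : (6 * z ^ 2) = 2 * (3 * z ^ 2) := by ring
    rw [e]; simpa using h
  have hv : HasDerivAt (fun z : ℝ => 3 * (z ^ 2 - a)) (3 * (2 * z)) z := by
    have h := ((hasDerivAt_pow 2 z).sub_const a).const_mul 3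
    simpa using h
  have hdiv := hu.div hv hQ'
  convert hdiv using 1
  · rfl
  · rfl
  · rfl
  have hQ'' : z ^ 2 - a ≠ 0 := ne_of_gt hQ
  field_simp
  ring

/-- The key algebraic identity `27(z²-a)³(y³-3ay+b) = (z³-3az+b)²(8z³-6az-b)`. -/
lemma hermite_auxId (a b z : ℝ) (hQ : z ^ 2 - a > 0) :
    ((2 * z ^ 3 - b) / (3 * (z ^ 2 - a))) ^ 3
      - 3 * a * ((2 * z ^ 3 - b) / (3 * (z ^ 2 - a))) + b
    = (z ^ 3 - 3 * a * z + b) ^ 2 * (8 * z ^ 3 - 6 * a * z - b)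
        / (27 * (z ^ 2 - a) ^ 3) := by
  have hQ' : z ^ 2 - a ≠ 0 := ne_of_gt hQ
  field_simp
  ring

lemma hermite_auxPos (a b z : ℝ) (hQ : z ^ 2 - a > 0)
    (hP : 8 * z ^ 3 - 6 * a * z - b > 0) (hR : z ^ 3 - 3 * a * z + b > 0) :
    ((2 * z ^ 3 - b) / (3 * (z ^ 2 - a))) ^ 3
      - 3 * a * ((2 * z ^ 3 - b) / (3 * (z ^ 2 - a))) + b > 0 := by
  rw [hermite_auxId a b z hQ]
  positivity

/-- Square-root form of the key identity. -/
lemma hermite_auxC (a b z : ℝ) (hQ : z ^ 2 - a > 0)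
    (hP : 8 * z ^ 3 - 6 * a * z - b > 0) (hR : z ^ 3 - 3 * a * z + b > 0) :
    Real.sqrt (((2 * z ^ 3 - b) / (3 * (z ^ 2 - a))) ^ 3
        - 3 * a * ((2 * z ^ 3 - b) / (3 * (z ^ 2 - a))) + b)
      = (z ^ 3 - 3 * a * z + b) * Real.sqrt (8 * z ^ 3 - 6 * a * z - b)
          / (3 * Real.sqrt 3 * ((z ^ 2 - a) * Real.sqrt (z ^ 2 - a))) := by
  have e2 : Real.sqrt (z ^ 2 - a) ^ 2 = z ^ 2 - a := Real.sq_sqrt hQ.le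
  have e3 : Real.sqrt (8 * z ^ 3 - 6 * a * z - b) ^ 2 = 8 * z ^ 3 - 6 * a * z - b :=
    Real.sq_sqrt hP.le
  have e4 : Real.sqrt 3 ^ 2 = (3 : ℝ) := Real.sq_sqrt (by norm_num)
  have hden : (3 * Real.sqrt 3 * ((z ^ 2 - a) * Real.sqrt (z ^ 2 - a))) ^ 2
      = 27 * (z ^ 2 - a) ^ 3 := by
    rw [mul_pow, mul_pow, mul_pow, e4, e2]; ring
  have hnum : ((z ^ 3 - 3 * a * z + b) * Real.sqrt (8 * z ^ 3 - 6 * a * z - b)) ^ 2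
      = (z ^ 3 - 3 * a * z + b) ^ 2 * (8 * z ^ 3 - 6 * a * z - b) := by
    rw [mul_pow, e3]
  have hBnn : 0 ≤ (z ^ 3 - 3 * a * z + b) * Real.sqrt (8 * z ^ 3 - 6 * a * z - b)
      / (3 * Real.sqrt 3 * ((z ^ 2 - a) * Real.sqrt (z ^ 2 - a))) := by
    have h3 : (0:ℝ) < Real.sqrt 3 := Real.sqrt_pos.2 (by norm_num)
    have hsQ : (0:ℝ) < Real.sqrt (z ^ 2 - a) := Real.sqrt_pos.2 hQ
    have hsP : (0:ℝ) ≤ Real.sqrt (8 * z ^ 3 - 6 * a * z - b) := Real.sqrt_nonneg _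
    positivity
  rw [hermite_auxId a b z hQ, ← hden, ← hnum, ← div_pow, Real.sqrt_sq hBnn]

set_option maxHeartbeats 1000000 in
/-- Hermite's reduction of a hyperelliptic integral of the second kind to an elliptic
integral of the second kind, via the substitution `y = (2z³ - b)/(3(z² - a))`. -/
theorem hermite_reduction_second_kind (a b z₀ z₁ : ℝ) (hle : z₀ ≤ z₁)
    (hpos : ∀ z ∈ Set.Icc z₀ z₁,
      z ^ 2 - a > 0 ∧ 8 * z ^ 3 - 6 * a * z - b > 0 ∧ z ^ 3 - 3 * a * z + b > 0) :
    (∫ z in z₀..z₁,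
        (2 * z ^ 2 - a) / Real.sqrt ((z ^ 2 - a) * (8 * z ^ 3 - 6 * a * z - b)))
      - (1 / 3) *
        (Real.sqrt ((8 * z₁ ^ 3 - 6 * a * z₁ - b) / (z₁ ^ 2 - a))
          - Real.sqrt ((8 * z₀ ^ 3 - 6 * a * z₀ - b) / (z₀ ^ 2 - a))) =
      (1 / (2 * Real.sqrt 3)) *
        ∫ t in ((2 * z₀ ^ 3 - b) / (3 * (z₀ ^ 2 - a)))..
                ((2 * z₁ ^ 3 - b) / (3 * (z₁ ^ 2 - a))),
          t / Real.sqrt (t ^ 3 - 3 * a * t + b) := by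
  have huIcc : Set.uIcc z₀ z₁ = Set.Icc z₀ z₁ := Set.uIcc_of_le hle
  have h3 : (0:ℝ) < Real.sqrt 3 := Real.sqrt_pos.2 (by norm_num)
  -- notation
  set H' : ℝ → ℝ := fun z => (4 * z ^ 4 - 9 * a * z ^ 2 + b * z + 3 * a ^ 2) /
      (3 * ((z ^ 2 - a) * Real.sqrt (z ^ 2 - a)) * Real.sqrt (8 * z ^ 3 - 6 * a * z - b))
    with hH'def
  set g : ℝ → ℝ := fun z => z * (2 * z ^ 3 - b) /
      (3 * ((z ^ 2 - a) * Real.sqrt (z ^ 2 - a)) * Real.sqrt (8 * z ^ 3 - 6 * a * z - b))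
    with hgdef
  -- basic continuity facts
  have hcontQ : Continuous fun z : ℝ => z ^ 2 - a := by continuity
  have hcontP : Continuous fun z : ℝ => 8 * z ^ 3 - 6 * a * z - b := by continuity
  have hdenom : ∀ z ∈ Set.uIcc z₀ z₁,
      3 * ((z ^ 2 - a) * Real.sqrt (z ^ 2 - a)) * Real.sqrt (8 * z ^ 3 - 6 * a * z - b) ≠ 0 := by
    intro z hz
    rw [huIcc] at hz
    obtain ⟨hQ, hP, -⟩ := hpos z hz
    have hsQ : (0:ℝ) < Real.sqrt (z ^ 2 - a) := Real.sqrt_pos.2 hQ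
    have hsP : (0:ℝ) < Real.sqrt (8 * z ^ 3 - 6 * a * z - b) := Real.sqrt_pos.2 hP
    positivity
  have hcontDen : ContinuousOn (fun z : ℝ =>
      3 * ((z ^ 2 - a) * Real.sqrt (z ^ 2 - a)) * Real.sqrt (8 * z ^ 3 - 6 * a * z - b))
      (Set.uIcc z₀ z₁) := by
    apply Continuous.continuousOn
    exact ((continuous_const.mul (hcontQ.mul (hcontQ.sqrt))).mul (hcontP.sqrt))
  have hintH' : IntervalIntegrable H' MeasureTheory.volume z₀ z₁ := by
    apply ContinuousOn.intervalIntegrable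
    exact ContinuousOn.div (by fun_prop) hcontDen hdenom
  have hintg : IntervalIntegrable g MeasureTheory.volume z₀ z₁ := by
    apply ContinuousOn.intervalIntegrable
    exact ContinuousOn.div (by fun_prop) hcontDen hdenom
  -- FTC for the boundary term
  have hFTC : ∫ z in z₀..z₁, H' z =
      (1/3) * Real.sqrt ((8 * z₁ ^ 3 - 6 * a * z₁ - b) / (z₁ ^ 2 - a))
        - (1/3) * Real.sqrt ((8 * z₀ ^ 3 - 6 * a * z₀ - b) / (z₀ ^ 2 - a)) := by
    apply intervalIntegral.integral_eq_sub_of_hasDerivAt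
    · intro z hz
      rw [huIcc] at hz
      obtain ⟨hQ, hP, -⟩ := hpos z hz
      exact hermite_auxB a b z hQ hP
    · exact hintH'
  -- pointwise decomposition of the left integrand
  have hsplit : ∀ z ∈ Set.uIcc z₀ z₁,
      (2 * z ^ 2 - a) / Real.sqrt ((z ^ 2 - a) * (8 * z ^ 3 - 6 * a * z - b))
        = H' z + g z := by
    intro z hz
    rw [huIcc] at hz
    obtain ⟨hQ, hP, -⟩ := hpos z hz
    have hsQ : (0:ℝ) < Real.sqrt (z ^ 2 - a) := Real.sqrt_pos.2 hQ
    have hsP : (0:ℝ) < Real.sqrt (8 * z ^ 3 - 6 * a * z - b) := Real.sqrt_pos.2 hP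
    have e2 : Real.sqrt (z ^ 2 - a) ^ 2 = z ^ 2 - a := Real.sq_sqrt hQ.le
    have emul : Real.sqrt ((z ^ 2 - a) * (8 * z ^ 3 - 6 * a * z - b))
        = Real.sqrt (z ^ 2 - a) * Real.sqrt (8 * z ^ 3 - 6 * a * z - b) :=
      Real.sqrt_mul hQ.le _
    rw [hH'def, hgdef]
    simp only
    rw [emul]
    field_simp
    ring
  -- substitution for the right-hand side
  have hsub : (∫ z in z₀..z₁,
        (2 * z * (z ^ 3 - 3 * a * z + b) / (3 * (z ^ 2 - a) ^ 2)) •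
          ((fun t => t / Real.sqrt (t ^ 3 - 3 * a * t + b)) ∘
            (fun z => (2 * z ^ 3 - b) / (3 * (z ^ 2 - a)))) z)
      = ∫ t in ((2 * z₀ ^ 3 - b) / (3 * (z₀ ^ 2 - a)))..
              ((2 * z₁ ^ 3 - b) / (3 * (z₁ ^ 2 - a))),
          t / Real.sqrt (t ^ 3 - 3 * a * t + b) := by
    apply intervalIntegral.integral_comp_smul_deriv'
    · intro z hz
      rw [huIcc] at hz
      exact hermite_auxY a b z (hpos z hz).1
    · apply ContinuousOn.div (by fun_prop)
      · apply Continuous.continuousOn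
        exact (continuous_const.mul (hcontQ.pow 2))
      · intro z hz
        rw [huIcc] at hz
        have hQ := (hpos z hz).1
        positivity
    · intro t ht
      obtain ⟨z, hz, rfl⟩ := ht
      rw [huIcc] at hz
      obtain ⟨hQ, hP, hR⟩ := hpos z hz
      have hpos' := hermite_auxPos a b z hQ hP hR
      apply ContinuousWithinAt.div
      · exact continuousWithinAt_id
      · apply Continuous.continuousWithinAt
        exact (Real.continuous_sqrt.comp (by continuity))
      · exact ne_of_gt (Real.sqrt_pos.2 hpos')
  -- the substituted integrand equals `2√3 · g`
  have hinteg : ∀ z ∈ Set.uIcc z₀ z₁,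
      (2 * z * (z ^ 3 - 3 * a * z + b) / (3 * (z ^ 2 - a) ^ 2)) •
          ((fun t => t / Real.sqrt (t ^ 3 - 3 * a * t + b)) ∘
            (fun z => (2 * z ^ 3 - b) / (3 * (z ^ 2 - a)))) z
        = (2 * Real.sqrt 3) * g z := by
    intro z hz
    rw [huIcc] at hz
    obtain ⟨hQ, hP, hR⟩ := hpos z hz
    have hsQ : (0:ℝ) < Real.sqrt (z ^ 2 - a) := Real.sqrt_pos.2 hQ
    have hsP : (0:ℝ) < Real.sqrt (8 * z ^ 3 - 6 * a * z - b) := Real.sqrt_pos.2 hP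
    have e2 : Real.sqrt (z ^ 2 - a) ^ 2 = z ^ 2 - a := Real.sq_sqrt hQ.le
    have e4 : Real.sqrt 3 ^ 2 = (3:ℝ) := Real.sq_sqrt (by norm_num)
    simp only [Function.comp_apply, smul_eq_mul, hgdef]
    rw [hermite_auxC a b z hQ hP hR]
    have hQ' : z ^ 2 - a ≠ 0 := ne_of_gt hQ
    have hR' : z ^ 3 - 3 * a * z + b ≠ 0 := ne_of_gt hR
    have hsQ' := hsQ.ne'
    have hsP' := hsP.ne'
    have h3' := h3.ne'
    field_simp
    have hsP'' : Real.sqrt (z * (z ^ 2 * 8 - a * 6) - b) ≠ 0 := by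
      rw [show z * (z ^ 2 * 8 - a * 6) - b = 8 * z ^ 3 - 6 * a * z - b by ring]; exact hsP'
    have hR'' : z * (z ^ 2 - 3 * a) + b ≠ 0 := by
      rw [show z * (z ^ 2 - 3 * a) + b = z ^ 3 - 3 * a * z + b by ring]; exact hR'
    rw [e2, div_eq_div_iff (mul_ne_zero hR'' hsP'') hsP'']
    ring
  -- put everything together
  have hL : (∫ z in z₀..z₁,
      (2 * z ^ 2 - a) / Real.sqrt ((z ^ 2 - a) * (8 * z ^ 3 - 6 * a * z - b)))
      = (∫ z in z₀..z₁, H' z) + ∫ z in z₀..z₁, g z := by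
    rw [← intervalIntegral.integral_add hintH' hintg]
    exact intervalIntegral.integral_congr hsplit
  have hR2 : (∫ t in ((2 * z₀ ^ 3 - b) / (3 * (z₀ ^ 2 - a)))..
              ((2 * z₁ ^ 3 - b) / (3 * (z₁ ^ 2 - a))),
          t / Real.sqrt (t ^ 3 - 3 * a * t + b))
      = (2 * Real.sqrt 3) * ∫ z in z₀..z₁, g z := by
    rw [← hsub, intervalIntegral.integral_congr hinteg,
      intervalIntegral.integral_const_mul]
  rw [hL, hFTC, hR2]
  field_simp
  ring
end

section
/- Let e₁, e₂, e₃ be Weierstrass parameters with associated g₂, g₃, let p be a ℘-like function on a real open interval I, and let E ∈ ℂ. With f := E + p and v := 2p, at every point of I one has f²(E − v) + (1/2)·f·f'' − (1/4)·(f')² = (E + e₁)(E + e₂)(E + e₃). In particular the left-hand side is constant, and Q(E) = (E + e₁)(E + e₂)(E + e₃) for the Lamé case l₀ = 1. -/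
/-- Lamé case `l₀ = 1`: with `f = E + p` and `v = 2p`, the quantity
`f² (E - v) + (1/2) f f'' - (1/4) (f')²` equals `(E + e₁)(E + e₂)(E + e₃)` pointwise;
in particular `Q(E) = (E + e₁)(E + e₂)(E + e₃)`. -/
theorem lame_l1_Q_polynomial
    (a b : ℝ) (e₁ e₂ e₃ g₂ g₃ : ℂ)
    (hsum : e₁ + e₂ + e₃ = 0)
    (hg₂ : g₂ = -4 * (e₁ * e₂ + e₂ * e₃ + e₃ * e₁))
    (hg₃ : g₃ = 4 * e₁ * e₂ * e₃)
    (p p' p'' p''' : ℝ → ℂ)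
    (hp : ∀ x ∈ Set.Ioo a b, HasDerivAt p (p' x) x)
    (hp' : ∀ x ∈ Set.Ioo a b, HasDerivAt p' (p'' x) x)
    (hp'' : ∀ x ∈ Set.Ioo a b, HasDerivAt p'' (p''' x) x)
    (hpde : ∀ x ∈ Set.Ioo a b, (p' x) ^ 2 = 4 * (p x) ^ 3 - g₂ * p x - g₃)
    (hpde' : ∀ x ∈ Set.Ioo a b, p'' x = 6 * (p x) ^ 2 - (1/2) * g₂)
    (E : ℂ)
    (f₁ f₂ : ℝ → ℂ)
    (hf₁ : ∀ x ∈ Set.Ioo a b, HasDerivAt (fun t => E + p t) (f₁ x) x)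
    (hf₂ : ∀ x ∈ Set.Ioo a b, HasDerivAt f₁ (f₂ x) x) :
    ∀ x ∈ Set.Ioo a b,
      (E + p x) ^ 2 * (E - 2 * p x) + (1/2) * (E + p x) * f₂ x - (1/4) * (f₁ x) ^ 2
        = (E + e₁) * (E + e₂) * (E + e₃) := by
  intro x hx
  -- f₁ agrees with p' on the open interval
  have hf₁eq : ∀ y ∈ Set.Ioo a b, f₁ y = p' y := by
    intro y hy
    exact (hf₁ y hy).unique ((hp y hy).const_add E)
  -- f₂ x = p'' x
  have hf₂eq : f₂ x = p'' x := by
    have h1 : HasDerivAt f₁ (p'' x) x := by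
      refine (hp' x hx).congr_of_eventuallyEq ?_
      filter_upwards [isOpen_Ioo.mem_nhds hx] with y hy using hf₁eq y hy
    exact (hf₂ x hx).unique h1
  rw [hf₁eq x hx, hf₂eq, hpde' x hx, hpde x hx]
  have h3 : e₁ + e₂ + e₃ = 0 := hsum
  -- both sides equal E^3 - (g₂/4) E + g₃/4
  have : (E + e₁) * (E + e₂) * (E + e₃)
      = E ^ 3 + (e₁ + e₂ + e₃) * E ^ 2 + (e₁ * e₂ + e₂ * e₃ + e₃ * e₁) * E
        + e₁ * e₂ * e₃ := by ring
  rw [this, h3, hg₂, hg₃]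
  ring
end

section
/- Let e₁, e₂, e₃ be Weierstrass parameters with associated g₂, g₃, let p be a ℘-like function on a real open interval I, and let E ∈ ℂ. Then f := 9p² + 3E·p + E² − (9/4)g₂ is three times differentiable on I and satisfies f''' = 4(6p − E)·f' + 12p'·f (i.e. the product equation with potential v = 6p, the Lamé case l₀ = 2). -/
/-- Lamé case `l₀ = 2`: for a ℘-like function `p`, the function
`f = 9p² + 3E p + E² - (9/4)g₂` is three times differentiable and satisfies the product
equation `f''' = 4 (6p - E) f' + 12 p' f` with potential `v = 6p`. -/
theorem lame_l2_product_equation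
    (a b : ℝ) (e₁ e₂ e₃ g₂ g₃ : ℂ)
    (hsum : e₁ + e₂ + e₃ = 0)
    (hg₂ : g₂ = -4 * (e₁ * e₂ + e₂ * e₃ + e₃ * e₁))
    (hg₃ : g₃ = 4 * e₁ * e₂ * e₃)
    (p p' p'' p''' : ℝ → ℂ)
    (hp : ∀ x ∈ Set.Ioo a b, HasDerivAt p (p' x) x)
    (hp' : ∀ x ∈ Set.Ioo a b, HasDerivAt p' (p'' x) x)
    (hp'' : ∀ x ∈ Set.Ioo a b, HasDerivAt p'' (p''' x) x)
    (hpde : ∀ x ∈ Set.Ioo a b, (p' x) ^ 2 = 4 * (p x) ^ 3 - g₂ * p x - g₃)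
    (hpde' : ∀ x ∈ Set.Ioo a b, p'' x = 6 * (p x) ^ 2 - (1/2) * g₂)
    (E : ℂ) :
    ∃ f₁ f₂ f₃ : ℝ → ℂ, ∀ x ∈ Set.Ioo a b,
      HasDerivAt (fun t => 9 * (p t) ^ 2 + 3 * E * p t + E ^ 2 - (9/4) * g₂) (f₁ x) x ∧
      HasDerivAt f₁ (f₂ x) x ∧
      HasDerivAt f₂ (f₃ x) x ∧
      f₃ x = 4 * (6 * p x - E) * f₁ x
        + 12 * p' x * (9 * (p x) ^ 2 + 3 * E * p x + E ^ 2 - (9/4) * g₂) := by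
  -- third derivative of p equals 12 p p'
  have hppp : ∀ x ∈ Set.Ioo a b, p''' x = 12 * p x * p' x := by
    intro x hx
    have h1 : HasDerivAt (fun t => 6 * (p t) ^ 2 - (1/2) * g₂) (12 * p x * p' x) x := by
      have := (((hp x hx).mul (hp x hx)).const_mul (6 : ℂ)).sub_const ((1/2) * g₂)
      convert this using 1
      · rfl
      · funext t; simp only [Pi.mul_apply, Pi.add_apply]; ring
      · ring
    have h2 : HasDerivAt p'' (12 * p x * p' x) x := by
      refine h1.congr_of_eventuallyEq ?_
      filter_upwards [Ioo_mem_nhds hx.1 hx.2] with t ht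
      exact hpde' t ht
    exact (hp'' x hx).unique h2
  refine ⟨fun x => 18 * p x * p' x + 3 * E * p' x,
    fun x => 18 * (p' x) ^ 2 + 18 * p x * p'' x + 3 * E * p'' x,
    fun x => 54 * p' x * p'' x + 18 * p x * p''' x + 3 * E * p''' x, ?_⟩
  intro x hx
  have hpx := hp x hx
  have hpx' := hp' x hx
  have hpx'' := hp'' x hx
  refine ⟨?_, ?_, ?_, ?_⟩
  · have := ((((hpx.mul hpx).const_mul (9:ℂ)).add (hpx.const_mul (3*E))).add_const (E^2)).sub_const ((9/4)*g₂)
    convert this using 1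
    · rfl
    · funext t; simp only [Pi.mul_apply, Pi.add_apply]; ring
    · ring
  · have := ((hpx.mul hpx').const_mul (18:ℂ)).add (hpx'.const_mul (3*E))
    convert this using 1
    · rfl
    · funext t; simp only [Pi.mul_apply, Pi.add_apply]; ring
    · ring
  · have := ((((hpx'.mul hpx').const_mul (18:ℂ)).add ((hpx.mul hpx'').const_mul 18)).add (hpx''.const_mul (3*E)))
    convert this using 1
    · rfl
    · funext t; simp only [Pi.mul_apply, Pi.add_apply]; ring
    · ring
  · simp only [hppp x hx, hpde' x hx]
    ring
end

section
/- Let e₁, e₂, e₃ be Weierstrass parameters with associated g₂, g₃, let p be a ℘-like function on a real open interval I, and let E ∈ ℂ. With f := 9p² + 3E·p + E² − (9/4)g₂ and v := 6p, at every point of I one has f²(E − v) + (1/2)·f·f'' − (1/4)·(f')² = (E² − 3g₂)(E − 3e₁)(E − 3e₂)(E − 3e₃). In particular Q(E) = (E² − 3g₂)(E − 3e₁)(E − 3e₂)(E − 3e₃) for the Lamé case l₀ = 2. -/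
/-- Lamé case `l₀ = 2`: with `f = 9p² + 3E p + E² - (9/4)g₂` and `v = 6p`, one has
`f² (E - v) + (1/2) f f'' - (1/4) (f')² = (E² - 3g₂)(E - 3e₁)(E - 3e₂)(E - 3e₃)`
pointwise; in particular this is `Q(E)` for the Lamé case `l₀ = 2`. -/
theorem lame_l2_Q_polynomial
    (a b : ℝ) (e₁ e₂ e₃ g₂ g₃ : ℂ)
    (hsum : e₁ + e₂ + e₃ = 0)
    (hg₂ : g₂ = -4 * (e₁ * e₂ + e₂ * e₃ + e₃ * e₁))
    (hg₃ : g₃ = 4 * e₁ * e₂ * e₃)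
    (p p' p'' p''' : ℝ → ℂ)
    (hp : ∀ x ∈ Set.Ioo a b, HasDerivAt p (p' x) x)
    (hp' : ∀ x ∈ Set.Ioo a b, HasDerivAt p' (p'' x) x)
    (hp'' : ∀ x ∈ Set.Ioo a b, HasDerivAt p'' (p''' x) x)
    (hpde : ∀ x ∈ Set.Ioo a b, (p' x) ^ 2 = 4 * (p x) ^ 3 - g₂ * p x - g₃)
    (hpde' : ∀ x ∈ Set.Ioo a b, p'' x = 6 * (p x) ^ 2 - (1/2) * g₂)
    (E : ℂ)
    (f₁ f₂ : ℝ → ℂ)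
    (hf₁ : ∀ x ∈ Set.Ioo a b,
      HasDerivAt (fun t => 9 * (p t) ^ 2 + 3 * E * p t + E ^ 2 - (9/4) * g₂) (f₁ x) x)
    (hf₂ : ∀ x ∈ Set.Ioo a b, HasDerivAt f₁ (f₂ x) x) :
    ∀ x ∈ Set.Ioo a b,
      (9 * (p x) ^ 2 + 3 * E * p x + E ^ 2 - (9/4) * g₂) ^ 2 * (E - 6 * p x)
        + (1/2) * (9 * (p x) ^ 2 + 3 * E * p x + E ^ 2 - (9/4) * g₂) * f₂ x
        - (1/4) * (f₁ x) ^ 2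
      = (E ^ 2 - 3 * g₂) * (E - 3 * e₁) * (E - 3 * e₂) * (E - 3 * e₃) := by
  have key : ∀ t ∈ Set.Ioo a b,
      HasDerivAt (fun s => 9 * (p s) ^ 2 + 3 * E * p s + E ^ 2 - (9/4) * g₂)
        ((18 * p t + 3 * E) * p' t) t := by
    intro t ht
    have hpt := hp t ht
    have h9 : HasDerivAt (fun s => 9 * (p s) ^ 2) (9 * (p' t * p t + p t * p' t)) t := by
      have h := (hpt.mul hpt).const_mul (9 : ℂ)
      simp only [pow_two]
      exact h
    have h3 : HasDerivAt (fun s => 3 * E * p s) (3 * E * p' t) t := hpt.const_mul (3 * E)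
    have h := (h9.add h3).add_const (E ^ 2 - (9/4) * g₂)
    convert h using 1
    · rfl
    · funext s; simp only [Pi.add_apply]; ring
    · ring
  intro x hx
  have hxI : Set.Ioo a b ∈ nhds x := (isOpen_Ioo).mem_nhds hx
  have hf1x : f₁ x = (18 * p x + 3 * E) * p' x := (hf₁ x hx).unique (key x hx)
  have hf1eq : ∀ t ∈ Set.Ioo a b, f₁ t = (18 * p t + 3 * E) * p' t := fun t ht =>
    (hf₁ t ht).unique (key t ht)
  have hd2 : HasDerivAt (fun t => (18 * p t + 3 * E) * p' t)
      (18 * p' x * p' x + (18 * p x + 3 * E) * p'' x) x := by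
    have h1 : HasDerivAt (fun t => 18 * p t + 3 * E) (18 * p' x) x := by
      simpa using ((hp x hx).const_mul (18 : ℂ)).add_const (3 * E)
    exact h1.mul (hp' x hx)
  have hd2' : HasDerivAt f₁ (18 * p' x * p' x + (18 * p x + 3 * E) * p'' x) x := by
    refine hd2.congr_of_eventuallyEq ?_
    filter_upwards [hxI] with t ht using (hf1eq t ht)
  have hf2x : f₂ x = 18 * p' x * p' x + (18 * p x + 3 * E) * p'' x :=
    (hf₂ x hx).unique hd2'
  have h1 := hpde x hx
  have h2 := hpde' x hx
  have he3 : e₃ = -e₁ - e₂ := by linear_combination hsum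
  rw [hf1x, hf2x, h2]
  subst hg₂ hg₃ he3
  linear_combination (9 * (9 * (p x) ^ 2 + 3 * E * p x + E ^ 2
      - (9/4) * (-4 * (e₁ * e₂ + e₂ * (-e₁ - e₂) + (-e₁ - e₂) * e₁)))
      - (1/4) * (18 * p x + 3 * E) ^ 2) * h1
end

section
/- Let g₂, g₃ ∈ ℂ and let E ∈ ℂ satisfy E² ≠ 3g₂. Define ξ := (27g₃ − E³)/(9(E² − 3g₂)). Then 729(E² − 3g₂)³·(4ξ³ − g₂ξ − g₃) = −(E³ − 9g₂E + 54g₃)²·(4E³ − 9g₂E − 27g₃). In other words, under the covering map ξ(E) of the case (l₀, l₁, l₂, l₃) = (2,0,0,0), the value 4ξ³ − g₂ξ − g₃ equals −Q(E) times the square of a rational function of E, where Q(E) = (E² − 3g₂)(E³ − (9/4)g₂E − (27/4)g₃). -/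
/-- For the covering map `ξ(E) = (27g₃ - E³)/(9(E² - 3g₂))` of the case
`(l₀,l₁,l₂,l₃) = (2,0,0,0)`:
`729 (E² - 3g₂)³ (4ξ³ - g₂ ξ - g₃) = -(E³ - 9g₂E + 54g₃)² (4E³ - 9g₂E - 27g₃)`. -/
theorem covering_map_2000_pullback_identity
    (g₂ g₃ E : ℂ) (hE : E ^ 2 ≠ 3 * g₂) :
    729 * (E ^ 2 - 3 * g₂) ^ 3 *
        (4 * ((27 * g₃ - E ^ 3) / (9 * (E ^ 2 - 3 * g₂))) ^ 3
          - g₂ * ((27 * g₃ - E ^ 3) / (9 * (E ^ 2 - 3 * g₂))) - g₃)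
      = -(E ^ 3 - 9 * g₂ * E + 54 * g₃) ^ 2 * (4 * E ^ 3 - 9 * g₂ * E - 27 * g₃) := by
  have h : (9 : ℂ) * (E ^ 2 - 3 * g₂) ≠ 0 := by
    intro h
    apply hE
    have h9 : E ^ 2 - 3 * g₂ = 0 := by
      rcases mul_eq_zero.mp h with h'|h'
      · norm_num at h'
      · exact h'
    linear_combination h9
  field_simp
  ring
end

section
/- Let e₁, e₂, e₃ be pairwise distinct Weierstrass parameters with associated g₂, g₃, let p be a ℘-like function on a real open interval I with p(x) ∉ {e₁, e₂, e₃} for all x ∈ I, and let q₁, q₂, q₃ be the half-period translates of p. Let E ∈ ℂ. Then f := E + p + q₁ + q₂ + q₃ is three times differentiable on I and satisfies the product equation f''' = 4(v − E)·f' + 2v'·f with potential v := 2(p + q₁ + q₂ + q₃) (the case (l₀, l₁, l₂, l₃) = (1,1,1,1)). -/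
/-- Derivatives of the half-period translate `q = e + c/(p - e)` of a function `p`,
together with its second and third derivatives. -/
lemma weier_aux (c e : ℂ) (p p' p'' p''' : ℝ → ℂ) (x : ℝ)
    (h0 : HasDerivAt p (p' x) x) (h1 : HasDerivAt p' (p'' x) x)
    (h2 : HasDerivAt p'' (p''' x) x) (hne : p x - e ≠ 0) :
    HasDerivAt (fun y => e + c / (p y - e)) (-(c * p' x) / (p x - e) ^ 2) x ∧
    HasDerivAt (fun y => -(c * p' y) / (p y - e) ^ 2)
      (-(c * p'' x) / (p x - e) ^ 2 + 2 * c * (p' x) ^ 2 / (p x - e) ^ 3) x ∧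
    HasDerivAt (fun y => -(c * p'' y) / (p y - e) ^ 2 + 2 * c * (p' y) ^ 2 / (p y - e) ^ 3)
      (-(c * p''' x) / (p x - e) ^ 2 + 6 * c * (p' x * p'' x) / (p x - e) ^ 3
        - 6 * c * (p' x) ^ 3 / (p x - e) ^ 4) x := by
  have hd : HasDerivAt (fun y => p y - e) (p' x) x := h0.sub_const e
  have hd2 : HasDerivAt (fun y => (p y - e) ^ 2)
      (p' x * (p x - e) + (p x - e) * p' x) x := by
    have := hd.fun_mul hd
    simpa [sq] using this
  have hd3 : HasDerivAt (fun y => (p y - e) ^ 3)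
      ((p' x * (p x - e) + (p x - e) * p' x) * (p x - e) + (p x - e) ^ 2 * p' x) x := by
    have := hd2.fun_mul hd
    simpa [pow_succ] using this
  have hq2 : HasDerivAt (fun y => (p' y) ^ 2) (p'' x * p' x + p' x * p'' x) x := by
    have := h1.fun_mul h1
    simpa [sq] using this
  have hn2 : (p x - e) ^ 2 ≠ 0 := pow_ne_zero 2 hne
  have hn3 : (p x - e) ^ 3 ≠ 0 := pow_ne_zero 3 hne
  refine ⟨?_, ?_, ?_⟩
  · have h := ((hasDerivAt_const x c).fun_div hd hne).const_add e
    convert h using 1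
    · rfl
    field_simp
    ring
  · have h := ((h1.const_mul c).fun_neg).fun_div hd2 hn2
    convert h using 1
    · rfl
    field_simp
    ring
  · have h := (((h2.const_mul c).fun_neg).fun_div hd2 hn2).add
      ((hq2.const_mul (2 * c)).fun_div hd3 hn3)
    convert h using 1
    · rfl
    · rfl
    field_simp
    ring

/-- Each half-period translate satisfies `q'' = 6 q² - g₂/2` (scalar form). -/
lemma weier_qdd (A B C g₂ g₃ P Q : ℂ)
    (hsum : A + B + C = 0)
    (hg₂ : g₂ = -4 * (A * B + B * C + C * A))
    (hg₃ : g₃ = 4 * A * B * C)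
    (hQ : Q ^ 2 = 4 * P ^ 3 - g₂ * P - g₃)
    (hne : P - A ≠ 0) :
    -((A - B) * (A - C) * (6 * P ^ 2 - (1/2) * g₂)) / (P - A) ^ 2
      + 2 * ((A - B) * (A - C)) * Q ^ 2 / (P - A) ^ 3
      = 6 * (A + (A - B) * (A - C) / (P - A)) ^ 2 - (1/2) * g₂ := by
  have hC : C = -(A + B) := by linear_combination hsum
  subst hg₂ hg₃ hC
  rw [hQ]
  field_simp
  ring

set_option maxHeartbeats 1000000 in
/-- Cross-term identity: `p² + q₁² + q₂² + q₃² + g₂ = s²` where `s = p + q₁ + q₂ + q₃`. -/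
lemma weier_cross (e₁ e₂ e₃ g₂ P : ℂ)
    (hsum : e₁ + e₂ + e₃ = 0)
    (hg₂ : g₂ = -4 * (e₁ * e₂ + e₂ * e₃ + e₃ * e₁))
    (hn1 : P - e₁ ≠ 0) (hn2 : P - e₂ ≠ 0) (hn3 : P - e₃ ≠ 0) :
    P ^ 2 + (e₁ + (e₁ - e₂) * (e₁ - e₃) / (P - e₁)) ^ 2
      + (e₂ + (e₂ - e₁) * (e₂ - e₃) / (P - e₂)) ^ 2
      + (e₃ + (e₃ - e₁) * (e₃ - e₂) / (P - e₃)) ^ 2 + g₂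
      = (P + (e₁ + (e₁ - e₂) * (e₁ - e₃) / (P - e₁))
          + (e₂ + (e₂ - e₁) * (e₂ - e₃) / (P - e₂))
          + (e₃ + (e₃ - e₁) * (e₃ - e₂) / (P - e₃))) ^ 2 := by
  have hC : e₃ = -(e₁ + e₂) := by linear_combination hsum
  subst hg₂ hC
  have hn3' : P + (e₁ + e₂) ≠ 0 := fun h => hn3 (by linear_combination h)
  simp only [sub_neg_eq_add]
  field_simp
  ring

set_option maxHeartbeats 1000000 in
/-- Case `(l₀,l₁,l₂,l₃) = (1,1,1,1)`: with `q₁, q₂, q₃` the half-period translates of a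
℘-like function `p`, the function `f = E + p + q₁ + q₂ + q₃` is three times
differentiable and satisfies the product equation `f''' = 4 (v - E) f' + 2 v' f` with
potential `v = 2(p + q₁ + q₂ + q₃)`. -/
theorem case_1111_product_equation
    (a b : ℝ) (e₁ e₂ e₃ g₂ g₃ : ℂ)
    (hsum : e₁ + e₂ + e₃ = 0)
    (hne₁₂ : e₁ ≠ e₂) (hne₂₃ : e₂ ≠ e₃) (hne₁₃ : e₁ ≠ e₃)
    (hg₂ : g₂ = -4 * (e₁ * e₂ + e₂ * e₃ + e₃ * e₁))
    (hg₃ : g₃ = 4 * e₁ * e₂ * e₃)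
    (p p' p'' p''' : ℝ → ℂ)
    (hp : ∀ x ∈ Set.Ioo a b, HasDerivAt p (p' x) x)
    (hp' : ∀ x ∈ Set.Ioo a b, HasDerivAt p' (p'' x) x)
    (hp'' : ∀ x ∈ Set.Ioo a b, HasDerivAt p'' (p''' x) x)
    (hpde : ∀ x ∈ Set.Ioo a b, (p' x) ^ 2 = 4 * (p x) ^ 3 - g₂ * p x - g₃)
    (hpde' : ∀ x ∈ Set.Ioo a b, p'' x = 6 * (p x) ^ 2 - (1/2) * g₂)
    (havoid : ∀ x ∈ Set.Ioo a b, p x ≠ e₁ ∧ p x ≠ e₂ ∧ p x ≠ e₃)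
    (E : ℂ) :
    -- `q k = e_k + (e_k - e_k')(e_k - e_k'')/(p - e_k)`, the half-period translates
    let q₁ : ℝ → ℂ := fun x => e₁ + (e₁ - e₂) * (e₁ - e₃) / (p x - e₁)
    let q₂ : ℝ → ℂ := fun x => e₂ + (e₂ - e₁) * (e₂ - e₃) / (p x - e₂)
    let q₃ : ℝ → ℂ := fun x => e₃ + (e₃ - e₁) * (e₃ - e₂) / (p x - e₃)
    let f : ℝ → ℂ := fun x => E + p x + q₁ x + q₂ x + q₃ x
    let v : ℝ → ℂ := fun x => 2 * (p x + q₁ x + q₂ x + q₃ x)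
    ∃ f₁ f₂ f₃ v₁ : ℝ → ℂ,
      (∀ x ∈ Set.Ioo a b, HasDerivAt v (v₁ x) x) ∧
      ∀ x ∈ Set.Ioo a b,
        HasDerivAt f (f₁ x) x ∧
        HasDerivAt f₁ (f₂ x) x ∧
        HasDerivAt f₂ (f₃ x) x ∧
        f₃ x = 4 * (v x - E) * f₁ x + 2 * v₁ x * f x := by
  intro q₁ q₂ q₃ f v
  set c₁ : ℂ := (e₁ - e₂) * (e₁ - e₃) with hc₁
  set c₂ : ℂ := (e₂ - e₁) * (e₂ - e₃) with hc₂
  set c₃ : ℂ := (e₃ - e₁) * (e₃ - e₂) with hc₃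
  -- the sum `s = p + q₁ + q₂ + q₃` and candidate derivatives
  set S : ℝ → ℂ := fun x => p x + (e₁ + c₁ / (p x - e₁)) + (e₂ + c₂ / (p x - e₂))
      + (e₃ + c₃ / (p x - e₃)) with hS
  set F1 : ℝ → ℂ := fun x => p' x + -(c₁ * p' x) / (p x - e₁) ^ 2
      + -(c₂ * p' x) / (p x - e₂) ^ 2 + -(c₃ * p' x) / (p x - e₃) ^ 2 with hF1
  set F2 : ℝ → ℂ := fun x => p'' x
      + (-(c₁ * p'' x) / (p x - e₁) ^ 2 + 2 * c₁ * (p' x) ^ 2 / (p x - e₁) ^ 3)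
      + (-(c₂ * p'' x) / (p x - e₂) ^ 2 + 2 * c₂ * (p' x) ^ 2 / (p x - e₂) ^ 3)
      + (-(c₃ * p'' x) / (p x - e₃) ^ 2 + 2 * c₃ * (p' x) ^ 2 / (p x - e₃) ^ 3) with hF2
  set F3 : ℝ → ℂ := fun x => p''' x
      + (-(c₁ * p''' x) / (p x - e₁) ^ 2 + 6 * c₁ * (p' x * p'' x) / (p x - e₁) ^ 3
          - 6 * c₁ * (p' x) ^ 3 / (p x - e₁) ^ 4)
      + (-(c₂ * p''' x) / (p x - e₂) ^ 2 + 6 * c₂ * (p' x * p'' x) / (p x - e₂) ^ 3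
          - 6 * c₂ * (p' x) ^ 3 / (p x - e₂) ^ 4)
      + (-(c₃ * p''' x) / (p x - e₃) ^ 2 + 6 * c₃ * (p' x * p'' x) / (p x - e₃) ^ 3
          - 6 * c₃ * (p' x) ^ 3 / (p x - e₃) ^ 4) with hF3
  -- the key algebraic identity: `s'' = 6 s² - 8 g₂`
  have hkey : ∀ y ∈ Set.Ioo a b, F2 y = 6 * (S y * S y) - 8 * g₂ := by
    intro y hy
    obtain ⟨hv₁, hv₂, hv₃⟩ := havoid y hy
    have hn1 : p y - e₁ ≠ 0 := sub_ne_zero.mpr hv₁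
    have hn2 : p y - e₂ ≠ 0 := sub_ne_zero.mpr hv₂
    have hn3 : p y - e₃ ≠ 0 := sub_ne_zero.mpr hv₃
    have E1 := weier_qdd e₁ e₂ e₃ g₂ g₃ (p y) (p' y) hsum hg₂ hg₃ (hpde y hy) hn1
    have E2 := weier_qdd e₂ e₁ e₃ g₂ g₃ (p y) (p' y) (by linear_combination hsum)
      (by linear_combination hg₂) (by linear_combination hg₃) (hpde y hy) hn2
    have E3 := weier_qdd e₃ e₁ e₂ g₂ g₃ (p y) (p' y) (by linear_combination hsum)
      (by linear_combination hg₂) (by linear_combination hg₃) (hpde y hy) hn3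
    have EC := weier_cross e₁ e₂ e₃ g₂ (p y) hsum hg₂ hn1 hn2 hn3
    simp only [hF2, hS, hc₁, hc₂, hc₃]
    rw [hpde' y hy]
    linear_combination E1 + E2 + E3 + 6 * EC
  refine ⟨F1, F2, F3, fun x => 2 * F1 x, ?_, ?_⟩
  · intro x hx
    obtain ⟨hv₁, hv₂, hv₃⟩ := havoid x hx
    obtain ⟨a1, -, -⟩ := weier_aux c₁ e₁ p p' p'' p''' x (hp x hx) (hp' x hx) (hp'' x hx)
      (sub_ne_zero.mpr hv₁)
    obtain ⟨a2, -, -⟩ := weier_aux c₂ e₂ p p' p'' p''' x (hp x hx) (hp' x hx) (hp'' x hx)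
      (sub_ne_zero.mpr hv₂)
    obtain ⟨a3, -, -⟩ := weier_aux c₃ e₃ p p' p'' p''' x (hp x hx) (hp' x hx) (hp'' x hx)
      (sub_ne_zero.mpr hv₃)
    exact ((((hp x hx).add a1).add a2).add a3).const_mul 2
  · intro x hx
    obtain ⟨hv₁, hv₂, hv₃⟩ := havoid x hx
    obtain ⟨a1, b1, d1⟩ := weier_aux c₁ e₁ p p' p'' p''' x (hp x hx) (hp' x hx) (hp'' x hx)
      (sub_ne_zero.mpr hv₁)
    obtain ⟨a2, b2, d2⟩ := weier_aux c₂ e₂ p p' p'' p''' x (hp x hx) (hp' x hx) (hp'' x hx)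
      (sub_ne_zero.mpr hv₂)
    obtain ⟨a3, b3, d3⟩ := weier_aux c₃ e₃ p p' p'' p''' x (hp x hx) (hp' x hx) (hp'' x hx)
      (sub_ne_zero.mpr hv₃)
    have hSd : HasDerivAt S (F1 x) x := (((hp x hx).add a1).add a2).add a3
    have hF2d : HasDerivAt F2 (F3 x) x := (((hp'' x hx).add d1).add d2).add d3
    have hGd : HasDerivAt (fun y => 6 * (S y * S y) - 8 * g₂)
        (6 * (F1 x * S x + S x * F1 x)) x := ((hSd.mul hSd).const_mul 6).sub_const (8 * g₂)
    have heq : F2 =ᶠ[nhds x] fun y => 6 * (S y * S y) - 8 * g₂ := by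
      filter_upwards [isOpen_Ioo.mem_nhds hx] with y hy using hkey y hy
    have hval : F3 x = 6 * (F1 x * S x + S x * F1 x) :=
      (hF2d.congr_of_eventuallyEq heq.symm).unique hGd
    refine ⟨((((hp x hx).const_add E).add a1).add a2).add a3,
      (((hp' x hx).add b1).add b2).add b3, hF2d, ?_⟩
    show F3 x = 4 * (v x - E) * F1 x + 2 * (2 * F1 x) * f x
    have hvx : v x = 2 * S x := rfl
    have hfx : f x = E + S x := by
      simp only [f, q₁, q₂, q₃, hS, hc₁, hc₂, hc₃]; ring
    rw [hval, hvx, hfx]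
    ring
end

section
/- Let e₁, e₂, e₃ be pairwise distinct Weierstrass parameters with associated g₂, g₃, let p be a ℘-like function on a real open interval I with p(x) ≠ e₁ for all x ∈ I, and let q₁ be the half-period translate of p for k = 1. Let E ∈ ℂ. Set f := E + p + q₁ − 3e₁ and v := 2(p + q₁). Then f satisfies the product equation f''' = 4(v − E)·f' + 2v'·f, and at every point of I one has f²(E − v) + (1/2)·f·f'' − (1/4)·(f')² = (E − 4e₁)(E² − 2e₁E + g₂ − 11e₁²). In particular Q(E) = (E − 4e₁)(E² − 2e₁E + g₂ − 11e₁²) for the case (l₀, l₁, l₂, l₃) = (1,1,0,0). -/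
set_option maxHeartbeats 1600000


/-- Case `(l₀,l₁,l₂,l₃) = (1,1,0,0)`: with `f = E + p + q₁ - 3e₁` and `v = 2(p + q₁)`,
the function `f` satisfies the product equation `f''' = 4 (v - E) f' + 2 v' f`, and
`f² (E - v) + (1/2) f f'' - (1/4) (f')² = (E - 4e₁)(E² - 2e₁E + g₂ - 11e₁²)`;
in particular this is `Q(E)` for the case `(1,1,0,0)`. -/
theorem case_1100_product_equation_and_Q
    (a b : ℝ) (e₁ e₂ e₃ g₂ g₃ : ℂ)
    (hsum : e₁ + e₂ + e₃ = 0)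
    (hne₁₂ : e₁ ≠ e₂) (hne₂₃ : e₂ ≠ e₃) (hne₁₃ : e₁ ≠ e₃)
    (hg₂ : g₂ = -4 * (e₁ * e₂ + e₂ * e₃ + e₃ * e₁))
    (hg₃ : g₃ = 4 * e₁ * e₂ * e₃)
    (p p' p'' p''' : ℝ → ℂ)
    (hp : ∀ x ∈ Set.Ioo a b, HasDerivAt p (p' x) x)
    (hp' : ∀ x ∈ Set.Ioo a b, HasDerivAt p' (p'' x) x)
    (hp'' : ∀ x ∈ Set.Ioo a b, HasDerivAt p'' (p''' x) x)
    (hpde : ∀ x ∈ Set.Ioo a b, (p' x) ^ 2 = 4 * (p x) ^ 3 - g₂ * p x - g₃)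
    (hpde' : ∀ x ∈ Set.Ioo a b, p'' x = 6 * (p x) ^ 2 - (1/2) * g₂)
    (havoid : ∀ x ∈ Set.Ioo a b, p x ≠ e₁)
    (E : ℂ) :
    let q₁ : ℝ → ℂ := fun x => e₁ + (e₁ - e₂) * (e₁ - e₃) / (p x - e₁)
    let f : ℝ → ℂ := fun x => E + p x + q₁ x - 3 * e₁
    let v : ℝ → ℂ := fun x => 2 * (p x + q₁ x)
    ∃ f₁ f₂ f₃ v₁ : ℝ → ℂ,
      (∀ x ∈ Set.Ioo a b, HasDerivAt v (v₁ x) x) ∧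
      ∀ x ∈ Set.Ioo a b,
        HasDerivAt f (f₁ x) x ∧
        HasDerivAt f₁ (f₂ x) x ∧
        HasDerivAt f₂ (f₃ x) x ∧
        f₃ x = 4 * (v x - E) * f₁ x + 2 * v₁ x * f x ∧
        (f x) ^ 2 * (E - v x) + (1/2) * f x * f₂ x - (1/4) * (f₁ x) ^ 2
          = (E - 4 * e₁) * (E ^ 2 - 2 * e₁ * E + g₂ - 11 * e₁ ^ 2) := by
  intro q₁ f v
  have he₃ : e₃ = -e₁ - e₂ := by linear_combination hsum
  refine ⟨fun x => p' x - (e₁ - e₂) * (e₁ - e₃) * p' x / (p x - e₁) ^ 2,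
    fun x => p'' x - (e₁ - e₂) * (e₁ - e₃) * p'' x / (p x - e₁) ^ 2
      + 2 * ((e₁ - e₂) * (e₁ - e₃)) * (p' x) ^ 2 / (p x - e₁) ^ 3,
    fun x => p''' x - (e₁ - e₂) * (e₁ - e₃) * p''' x / (p x - e₁) ^ 2
      + 6 * ((e₁ - e₂) * (e₁ - e₃)) * (p' x * p'' x) / (p x - e₁) ^ 3
      - 6 * ((e₁ - e₂) * (e₁ - e₃)) * (p' x) ^ 3 / (p x - e₁) ^ 4,
    fun x => 2 * (p' x - (e₁ - e₂) * (e₁ - e₃) * p' x / (p x - e₁) ^ 2),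
    ?_, ?_⟩
  · intro x hx
    have hd : p x - e₁ ≠ 0 := sub_ne_zero.mpr (havoid x hx)
    have hpd : HasDerivAt (fun y => p y - e₁) (p' x) x := (hp x hx).sub_const e₁
    have hq : HasDerivAt q₁
        ((0 * (p x - e₁) - (e₁ - e₂) * (e₁ - e₃) * p' x) / (p x - e₁) ^ 2) x :=
      (hasDerivAt_const x e₁).add
        ((hasDerivAt_const x ((e₁ - e₂) * (e₁ - e₃))).div hpd hd) |>.congr_deriv (by ring)
    have hv : HasDerivAt v (2 * (p' x + (0 * (p x - e₁) - (e₁ - e₂) * (e₁ - e₃) * p' x) / (p x - e₁) ^ 2)) x :=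
      ((hp x hx).add hq).const_mul 2
    convert hv using 1
    field_simp
    ring
  · intro x hx
    have hd : p x - e₁ ≠ 0 := sub_ne_zero.mpr (havoid x hx)
    have hd2 : (p x - e₁) ^ 2 ≠ 0 := pow_ne_zero 2 hd
    have hd3 : (p x - e₁) ^ 3 ≠ 0 := pow_ne_zero 3 hd
    have hpd : HasDerivAt (fun y => p y - e₁) (p' x) x := (hp x hx).sub_const e₁
    have hq : HasDerivAt q₁
        ((0 * (p x - e₁) - (e₁ - e₂) * (e₁ - e₃) * p' x) / (p x - e₁) ^ 2) x :=
      (hasDerivAt_const x e₁).add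
        ((hasDerivAt_const x ((e₁ - e₂) * (e₁ - e₃))).div hpd hd) |>.congr_deriv (by ring)
    have hf : HasDerivAt f
        (p' x - (e₁ - e₂) * (e₁ - e₃) * p' x / (p x - e₁) ^ 2) x := by
      have h := (((hasDerivAt_const x E).add (hp x hx)).add hq).sub_const (3 * e₁)
      convert h using 1
      · rfl
      · rfl
      field_simp
      ring
    have hpow2 : HasDerivAt (fun y => (p y - e₁) ^ 2)
        (2 * (p x - e₁) * p' x) x := by
      have h := (hpd.mul hpd).congr_of_eventuallyEq
        (Filter.Eventually.of_forall (fun y => by ring :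
          ∀ y, (p y - e₁) ^ 2 = (p y - e₁) * (p y - e₁)))
      exact h.congr_deriv (by ring)
    have hpow3 : HasDerivAt (fun y => (p y - e₁) ^ 3)
        (3 * (p x - e₁) ^ 2 * p' x) x := by
      have h := (hpd.mul (hpd.mul hpd)).congr_of_eventuallyEq
        (Filter.Eventually.of_forall (fun y => by ring :
          ∀ y, (p y - e₁) ^ 3 = (p y - e₁) * ((p y - e₁) * (p y - e₁))))
      exact h.congr_deriv (by simp only [Pi.mul_apply]; ring)
    have hsq' : HasDerivAt (fun y => (p' y) ^ 2) (2 * p' x * p'' x) x := by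
      have h := ((hp' x hx).mul (hp' x hx)).congr_of_eventuallyEq
        (Filter.Eventually.of_forall (fun y => by ring :
          ∀ y, (p' y) ^ 2 = p' y * p' y))
      exact h.congr_deriv (by ring)
    have hf1 : HasDerivAt (fun x => p' x - (e₁ - e₂) * (e₁ - e₃) * p' x / (p x - e₁) ^ 2)
        (p'' x - (e₁ - e₂) * (e₁ - e₃) * p'' x / (p x - e₁) ^ 2
          + 2 * ((e₁ - e₂) * (e₁ - e₃)) * (p' x) ^ 2 / (p x - e₁) ^ 3) x := by
      have h := (hp' x hx).sub
        ((((hasDerivAt_const x ((e₁ - e₂) * (e₁ - e₃))).mul (hp' x hx)).div hpow2 hd2))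
      convert h using 1
      · rfl
      · rfl
      simp only [Pi.mul_apply]
      field_simp
      ring
    have hf2 : HasDerivAt (fun x => p'' x - (e₁ - e₂) * (e₁ - e₃) * p'' x / (p x - e₁) ^ 2
          + 2 * ((e₁ - e₂) * (e₁ - e₃)) * (p' x) ^ 2 / (p x - e₁) ^ 3)
        (p''' x - (e₁ - e₂) * (e₁ - e₃) * p''' x / (p x - e₁) ^ 2
          + 6 * ((e₁ - e₂) * (e₁ - e₃)) * (p' x * p'' x) / (p x - e₁) ^ 3
          - 6 * ((e₁ - e₂) * (e₁ - e₃)) * (p' x) ^ 3 / (p x - e₁) ^ 4) x := by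
      have h := ((hp'' x hx).sub
        ((((hasDerivAt_const x ((e₁ - e₂) * (e₁ - e₃))).mul (hp'' x hx)).div hpow2 hd2))).add
        ((((hasDerivAt_const x (2 * ((e₁ - e₂) * (e₁ - e₃)))).mul hsq').div hpow3 hd3))
      convert h using 1
      · rfl
      · rfl
      simp only [Pi.mul_apply]
      field_simp
      ring
    have hP3 : p''' x = 12 * p x * p' x := by
      have h1 : HasDerivAt (fun y => 6 * (p y) ^ 2 - (1/2) * g₂)
          (12 * p x * p' x) x := by
        have hsqp : HasDerivAt (fun y => (p y) ^ 2) (2 * p x * p' x) x := by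
          have h := ((hp x hx).mul (hp x hx)).congr_of_eventuallyEq
            (Filter.Eventually.of_forall (fun y => by ring :
              ∀ y, (p y) ^ 2 = p y * p y))
          exact h.congr_deriv (by ring)
        have h0 := (hsqp.const_mul 6).sub_const ((1/2) * g₂)
        exact h0.congr_deriv (by ring)
      have h2 : p'' =ᶠ[nhds x] fun y => 6 * (p y) ^ 2 - (1/2) * g₂ :=
        Filter.eventually_of_mem (Ioo_mem_nhds hx.1 hx.2) (fun y hy => hpde' y hy)
      exact (hp'' x hx).unique (h1.congr_of_eventuallyEq h2)
    have hcube : (p' x) ^ 3 = (4 * (p x) ^ 3 - g₂ * p x - g₃) * p' x := by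
      rw [show (p' x) ^ 3 = (p' x) ^ 2 * p' x from by ring, hpde x hx]
    refine ⟨hf, hf1, hf2, ?_, ?_⟩
    · simp only [q₁, f, v]
      rw [hP3, hpde' x hx, hcube]
      field_simp
      rw [hg₂, hg₃, he₃]
      ring
    · simp only [q₁, f, v]
      rw [hpde' x hx,
        show (p' x - (e₁ - e₂) * (e₁ - e₃) * p' x / (p x - e₁) ^ 2) ^ 2
          = (p' x) ^ 2 * (1 - (e₁ - e₂) * (e₁ - e₃) / (p x - e₁) ^ 2) ^ 2 from by ring,
        hpde x hx]
      have h4 : (4:ℂ)*(p x-e₁)^4 ≠ 0 := by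
        exact mul_ne_zero (by norm_num) (pow_ne_zero 4 hd)
      have hfv : E + p x + (e₁ + (e₁-e₂)*(e₁-e₃)/(p x-e₁)) - 3*e₁
          = ((E+p x-2*e₁)*(p x-e₁) + (e₁-e₂)*(e₁-e₃))/(p x-e₁) := by
        field_simp [hd]
        ring
      have hEv : E - 2*(p x + (e₁+(e₁-e₂)*(e₁-e₃)/(p x-e₁)))
          = ((E-2*p x-2*e₁)*(p x-e₁) - 2*((e₁-e₂)*(e₁-e₃)))/(p x-e₁) := by
        field_simp [hd]
        ring
      have hf₂v : (6*(p x)^2 - (1/2)*g₂)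
            - (e₁-e₂)*(e₁-e₃)*(6*(p x)^2-(1/2)*g₂)/(p x-e₁)^2
            + 2*((e₁-e₂)*(e₁-e₃))*(4*(p x)^3-g₂*p x-g₃)/(p x-e₁)^3
          = ((6*(p x)^2 - (1/2)*g₂)*(p x-e₁)^3 - (e₁-e₂)*(e₁-e₃)*(6*(p x)^2-(1/2)*g₂)*(p x-e₁)
              + 2*((e₁-e₂)*(e₁-e₃))*(4*(p x)^3-g₂*p x-g₃))/(p x-e₁)^3 := by
        field_simp [hd]
      have hone : 1-(e₁-e₂)*(e₁-e₃)/(p x-e₁)^2 = ((p x-e₁)^2 - (e₁-e₂)*(e₁-e₃))/(p x-e₁)^2 := by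
        field_simp [hd]
      rw [hfv, hEv, hf₂v, hone]
      have e1 : (((E+p x-2*e₁)*(p x-e₁) + (e₁-e₂)*(e₁-e₃))/(p x-e₁))^2
            * (((E-2*p x-2*e₁)*(p x-e₁) - 2*((e₁-e₂)*(e₁-e₃)))/(p x-e₁))
          = (4*((E+p x-2*e₁)*(p x-e₁) + (e₁-e₂)*(e₁-e₃))^2
              * ((E-2*p x-2*e₁)*(p x-e₁) - 2*((e₁-e₂)*(e₁-e₃))) * (p x-e₁))/(4*(p x-e₁)^4) := by
        field_simp [hd]
      have e2 : (1/2)*(((E+p x-2*e₁)*(p x-e₁) + (e₁-e₂)*(e₁-e₃))/(p x-e₁))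
            * (((6*(p x)^2 - (1/2)*g₂)*(p x-e₁)^3 - (e₁-e₂)*(e₁-e₃)*(6*(p x)^2-(1/2)*g₂)*(p x-e₁)
              + 2*((e₁-e₂)*(e₁-e₃))*(4*(p x)^3-g₂*p x-g₃))/(p x-e₁)^3)
          = (2*((E+p x-2*e₁)*(p x-e₁) + (e₁-e₂)*(e₁-e₃))
              * ((6*(p x)^2 - (1/2)*g₂)*(p x-e₁)^3 - (e₁-e₂)*(e₁-e₃)*(6*(p x)^2-(1/2)*g₂)*(p x-e₁)
              + 2*((e₁-e₂)*(e₁-e₃))*(4*(p x)^3-g₂*p x-g₃)))/(4*(p x-e₁)^4) := by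
        field_simp [hd]
        ring
      have e3 : (1/4)*((4*(p x)^3-g₂*p x-g₃)*(((p x-e₁)^2 - (e₁-e₂)*(e₁-e₃))/(p x-e₁)^2)^2)
          = ((4*(p x)^3-g₂*p x-g₃)*((p x-e₁)^2 - (e₁-e₂)*(e₁-e₃))^2)/(4*(p x-e₁)^4) := by
        field_simp [hd]
      rw [e1, e2, e3, ← add_div, ← sub_div, div_eq_iff h4, hg₂, hg₃, he₃]
      ring
end

section
/- Let e₁, e₂, e₃ be Weierstrass parameters with associated g₂, g₃, let p be a ℘-like function on a real open interval I, and let E ∈ ℂ. Set f := 225p³ + 45E·p² + 6(E² − (75/8)g₂)·p + E³ − 15g₂E − (225/4)g₃ and v := 12p. Then f satisfies the product equation f''' = 4(12p − E)·f' + 24p'·f, and at every point of I one has f²(E − v) + (1/2)·f·f'' − (1/4)·(f')² = E·(E² + 6e₁E + 45e₁² − 15g₂)(E² + 6e₂E + 45e₂² − 15g₂)(E² + 6e₃E + 45e₃² − 15g₂). In particular Q(E) has this factored form for the Lamé case l₀ = 3. -/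
/-- Lamé case `l₀ = 3`: with `f = 225p³ + 45E p² + 6(E² - (75/8)g₂)p + E³ - 15g₂E -
(225/4)g₃` and `v = 12p`, the function `f` satisfies the product equation
`f''' = 4 (12p - E) f' + 24 p' f`, and
`f² (E - v) + (1/2) f f'' - (1/4) (f')²
  = E (E² + 6e₁E + 45e₁² - 15g₂)(E² + 6e₂E + 45e₂² - 15g₂)(E² + 6e₃E + 45e₃² - 15g₂)`;
in particular `Q(E)` has this factored form. -/
theorem lame_l3_product_equation_and_Q
    (a b : ℝ) (e₁ e₂ e₃ g₂ g₃ : ℂ)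
    (hsum : e₁ + e₂ + e₃ = 0)
    (hg₂ : g₂ = -4 * (e₁ * e₂ + e₂ * e₃ + e₃ * e₁))
    (hg₃ : g₃ = 4 * e₁ * e₂ * e₃)
    (p p' p'' p''' : ℝ → ℂ)
    (hp : ∀ x ∈ Set.Ioo a b, HasDerivAt p (p' x) x)
    (hp' : ∀ x ∈ Set.Ioo a b, HasDerivAt p' (p'' x) x)
    (hp'' : ∀ x ∈ Set.Ioo a b, HasDerivAt p'' (p''' x) x)
    (hpde : ∀ x ∈ Set.Ioo a b, (p' x) ^ 2 = 4 * (p x) ^ 3 - g₂ * p x - g₃)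
    (hpde' : ∀ x ∈ Set.Ioo a b, p'' x = 6 * (p x) ^ 2 - (1/2) * g₂)
    (E : ℂ) :
    let f : ℝ → ℂ := fun x =>
      225 * (p x) ^ 3 + 45 * E * (p x) ^ 2 + 6 * (E ^ 2 - (75/8) * g₂) * p x
        + E ^ 3 - 15 * g₂ * E - (225/4) * g₃
    ∃ f₁ f₂ f₃ : ℝ → ℂ, ∀ x ∈ Set.Ioo a b,
      HasDerivAt f (f₁ x) x ∧
      HasDerivAt f₁ (f₂ x) x ∧
      HasDerivAt f₂ (f₃ x) x ∧
      f₃ x = 4 * (12 * p x - E) * f₁ x + 24 * p' x * f x ∧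
      (f x) ^ 2 * (E - 12 * p x) + (1/2) * f x * f₂ x - (1/4) * (f₁ x) ^ 2
        = E * (E ^ 2 + 6 * e₁ * E + 45 * e₁ ^ 2 - 15 * g₂)
            * (E ^ 2 + 6 * e₂ * E + 45 * e₂ ^ 2 - 15 * g₂)
            * (E ^ 2 + 6 * e₃ * E + 45 * e₃ ^ 2 - 15 * g₂) := by
  intro f
  refine ⟨fun x => (675 * (p x) ^ 2 + 90 * E * p x + 6 * (E ^ 2 - (75/8) * g₂)) * p' x,
    fun x => (675 * (p x) ^ 2 + 90 * E * p x + 6 * (E ^ 2 - (75/8) * g₂)) * p'' x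
      + (1350 * p x + 90 * E) * (p' x) ^ 2,
    fun x => (675 * (p x) ^ 2 + 90 * E * p x + 6 * (E ^ 2 - (75/8) * g₂)) * p''' x
      + 3 * (1350 * p x + 90 * E) * p' x * p'' x + 1350 * (p' x) ^ 3, fun x hx => ?_⟩
  have Hp := hp x hx
  have Hp' := hp' x hx
  have Hp'' := hp'' x hx
  have Hp2 : HasDerivAt (fun y => (p y) ^ 2) (2 * p x * p' x) x := by
    have h := Hp.mul Hp
    have e : (fun y => p y * p y) = fun y => (p y) ^ 2 := by funext y; ring
    rw [show (p * p) = fun y => p y * p y from rfl, e] at h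
    exact h.congr_deriv (by ring)
  have Hp3 : HasDerivAt (fun y => (p y) ^ 3) (3 * (p x) ^ 2 * p' x) x := by
    have h := Hp2.mul Hp
    have e : (fun y => (p y) ^ 2 * p y) = fun y => (p y) ^ 3 := by funext y; ring
    rw [show ((fun y => p y ^ 2) * p) = fun y => p y ^ 2 * p y from rfl, e] at h
    exact h.congr_deriv (by ring)
  have Hq2 : HasDerivAt (fun y => (p' y) ^ 2) (2 * p' x * p'' x) x := by
    have h := Hp'.mul Hp'
    have e : (fun y => p' y * p' y) = fun y => (p' y) ^ 2 := by funext y; ring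
    rw [show (p' * p') = fun y => p' y * p' y from rfl, e] at h
    exact h.congr_deriv (by ring)
  have h3 : p''' x = 12 * p x * p' x := by
    have hEq : p'' =ᶠ[nhds x] fun y => 6 * (p y) ^ 2 - (1/2) * g₂ :=
      Filter.eventuallyEq_of_mem (isOpen_Ioo.mem_nhds hx) hpde'
    have hg := (Hp2.const_mul (6 : ℂ)).sub_const ((1/2) * g₂)
    have := Hp''.unique (hg.congr_of_eventuallyEq hEq)
    rw [this]; ring
  refine ⟨?_, ?_, ?_, ?_, ?_⟩
  · have h := (((((Hp3.const_mul (225 : ℂ)).add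
        (Hp2.const_mul (45 * E))).add
        (Hp.const_mul (6 * (E ^ 2 - (75/8) * g₂)))).add_const (E ^ 3)).sub_const
        (15 * g₂ * E)).sub_const ((225/4) * g₃)
    exact h.congr_deriv (by ring)
  · have h := (((Hp2.const_mul (675 : ℂ)).add
        (Hp.const_mul (90 * E))).add_const (6 * (E ^ 2 - (75/8) * g₂))).mul Hp'
    exact h.congr_deriv (by simp only [Pi.add_apply]; ring)
  · have h := ((((Hp2.const_mul (675 : ℂ)).add
        (Hp.const_mul (90 * E))).add_const (6 * (E ^ 2 - (75/8) * g₂))).mul Hp'').add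
        (((Hp.const_mul (1350 : ℂ)).add_const (90 * E)).mul Hq2)
    exact h.congr_deriv (by simp only [Pi.add_apply]; ring)
  · simp only [f]
    rw [h3, hpde' x hx]
    linear_combination (1350 * p' x) * hpde x hx
  · simp only [f]
    rw [hpde' x hx]
    have he₃ : e₃ = -e₁ - e₂ := by linear_combination hsum
    subst he₃ hg₂ hg₃
    linear_combination ((1/2) * (225 * (p x) ^ 3 + 45 * E * (p x) ^ 2
        + 6 * (E ^ 2 - (75/8) * (-4 * (e₁ * e₂ + e₂ * (-e₁ - e₂) + (-e₁ - e₂) * e₁))) * p x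
        + E ^ 3 - 15 * (-4 * (e₁ * e₂ + e₂ * (-e₁ - e₂) + (-e₁ - e₂) * e₁)) * E
        - (225/4) * (4 * e₁ * e₂ * (-e₁ - e₂))) * (1350 * p x + 90 * E)
      - (1/4) * (675 * (p x) ^ 2 + 90 * E * p x
        + 6 * (E ^ 2 - (75/8) * (-4 * (e₁ * e₂ + e₂ * (-e₁ - e₂) + (-e₁ - e₂) * e₁)))) ^ 2)
      * hpde x hx
end

section
/- Let e₁, e₂, e₃ be Weierstrass parameters with associated g₂, g₃, and let E ∈ ℂ satisfy (E + 4e₁)(E + 4e₂)(E + 4e₃) ≠ 0. Then the value e_k − (E² + 8e_kE + 4g₂ − 32e_k²)² / (16·(E + 4e₁)(E + 4e₂)(E + 4e₃)) is the same for k = 1, 2, and 3. This is the consistency of the covering map ℘(α) = e_k − 4H⁽ᵏ⁾(E)Ht⁽ᵏ⁾(E)²/((Σᵢ lᵢ(lᵢ+1))² H⁽⁰⁾(E)Ht⁽⁰⁾(E)²) for the case (l₀, l₁, l₂, l₃) = (1,1,1,1), where Σᵢ lᵢ(lᵢ+1) = 8, H⁽⁰⁾(E) = (E+4e₁)(E+4e₂)(E+4e₃),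 Ht⁽⁰⁾(E) = 1, H⁽ᵏ⁾(E) = 1 and Ht⁽ᵏ⁾(E) = E² + 8e_kE + 4g₂ − 32e_k². -/
/-- Consistency of the covering map for the case `(l₀,l₁,l₂,l₃) = (1,1,1,1)`:
the value `e_k - (E² + 8e_kE + 4g₂ - 32e_k²)² / (16 (E+4e₁)(E+4e₂)(E+4e₃))` is the
same for `k = 1, 2, 3`. -/
theorem covering_map_1111_consistency
    (e₁ e₂ e₃ g₂ g₃ : ℂ)
    (hsum : e₁ + e₂ + e₃ = 0)
    (hg₂ : g₂ = -4 * (e₁ * e₂ + e₂ * e₃ + e₃ * e₁))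
    (hg₃ : g₃ = 4 * e₁ * e₂ * e₃)
    (E : ℂ) (hE : (E + 4 * e₁) * (E + 4 * e₂) * (E + 4 * e₃) ≠ 0) :
    (e₁ - (E ^ 2 + 8 * e₁ * E + 4 * g₂ - 32 * e₁ ^ 2) ^ 2 /
        (16 * ((E + 4 * e₁) * (E + 4 * e₂) * (E + 4 * e₃)))
      = e₂ - (E ^ 2 + 8 * e₂ * E + 4 * g₂ - 32 * e₂ ^ 2) ^ 2 /
        (16 * ((E + 4 * e₁) * (E + 4 * e₂) * (E + 4 * e₃)))) ∧
    (e₁ - (E ^ 2 + 8 * e₁ * E + 4 * g₂ - 32 * e₁ ^ 2) ^ 2 /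
        (16 * ((E + 4 * e₁) * (E + 4 * e₂) * (E + 4 * e₃)))
      = e₃ - (E ^ 2 + 8 * e₃ * E + 4 * g₂ - 32 * e₃ ^ 2) ^ 2 /
        (16 * ((E + 4 * e₁) * (E + 4 * e₂) * (E + 4 * e₃)))) := by
  have h3 : e₃ = -e₁ - e₂ := by linear_combination hsum
  subst hg₂ h3
  constructor <;> rw [sub_eq_sub_iff_sub_eq_sub, ← sub_div, eq_div_iff (mul_ne_zero (by norm_num) hE)] <;> ring
end

section
/- Let e₁, e₂, e₃ be Weierstrass parameters with associated g₂, g₃, and let E ∈ ℂ satisfy E ≠ 0 and E² ≠ (75/4)g₂. Then the value e_k − (E² + 6e_kE + 45e_k² − 15g₂)·(E² + 15e_kE + (75/4)g₂ − 225e_k²)² / (36·E·(E² − (75/4)g₂)²) is the same for k = 1, 2, and 3. This is the consistency of the covering map ℘(α) = e_k − 4H⁽ᵏ⁾(E)Ht⁽ᵏ⁾(E)²/((Σᵢ lᵢ(lᵢ+1))² H⁽⁰⁾(E)Ht⁽⁰⁾(E)²) for the Lamé case (l₀, l₁, l₂, l₃) = (3,0,0,0), where Σᵢ lᵢ(lᵢ+1)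 = 12, H⁽⁰⁾(E) = E, Ht⁽⁰⁾(E) = E² − (75/4)g₂, H⁽ᵏ⁾(E) = E² + 6e_kE + 45e_k² − 15g₂ and Ht⁽ᵏ⁾(E) = E² + 15e_kE + (75/4)(g₂ − 12e_k²). -/
/-- Consistency of the covering map for the Lamé case `(l₀,l₁,l₂,l₃) = (3,0,0,0)`:
the value
`e_k - (E² + 6e_kE + 45e_k² - 15g₂)(E² + 15e_kE + (75/4)g₂ - 225e_k²)² /
 (36 E (E² - (75/4)g₂)²)` is the same for `k = 1, 2, 3`. -/
theorem covering_map_3000_consistency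
    (e₁ e₂ e₃ g₂ g₃ : ℂ)
    (hsum : e₁ + e₂ + e₃ = 0)
    (hg₂ : g₂ = -4 * (e₁ * e₂ + e₂ * e₃ + e₃ * e₁))
    (hg₃ : g₃ = 4 * e₁ * e₂ * e₃)
    (E : ℂ) (hE : E ≠ 0) (hE' : E ^ 2 ≠ (75/4) * g₂) :
    (e₁ - (E ^ 2 + 6 * e₁ * E + 45 * e₁ ^ 2 - 15 * g₂) *
          (E ^ 2 + 15 * e₁ * E + (75/4) * g₂ - 225 * e₁ ^ 2) ^ 2 /
        (36 * E * (E ^ 2 - (75/4) * g₂) ^ 2)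
      = e₂ - (E ^ 2 + 6 * e₂ * E + 45 * e₂ ^ 2 - 15 * g₂) *
          (E ^ 2 + 15 * e₂ * E + (75/4) * g₂ - 225 * e₂ ^ 2) ^ 2 /
        (36 * E * (E ^ 2 - (75/4) * g₂) ^ 2)) ∧
    (e₁ - (E ^ 2 + 6 * e₁ * E + 45 * e₁ ^ 2 - 15 * g₂) *
          (E ^ 2 + 15 * e₁ * E + (75/4) * g₂ - 225 * e₁ ^ 2) ^ 2 /
        (36 * E * (E ^ 2 - (75/4) * g₂) ^ 2)
      = e₃ - (E ^ 2 + 6 * e₃ * E + 45 * e₃ ^ 2 - 15 * g₂) *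
          (E ^ 2 + 15 * e₃ * E + (75/4) * g₂ - 225 * e₃ ^ 2) ^ 2 /
        (36 * E * (E ^ 2 - (75/4) * g₂) ^ 2)) := by
  have hD : 36 * E * (E ^ 2 - (75/4) * g₂) ^ 2 ≠ 0 :=
    mul_ne_zero (mul_ne_zero (by norm_num) hE) (pow_ne_zero _ (sub_ne_zero.mpr hE'))
  have key : ∀ a x : ℂ, a - x / (36 * E * (E ^ 2 - (75/4) * g₂) ^ 2)
      = (a * (36 * E * (E ^ 2 - (75/4) * g₂) ^ 2) - x) / (36 * E * (E ^ 2 - (75/4) * g₂) ^ 2) := by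
    intro a x
    rw [eq_div_iff hD, sub_mul, div_mul_cancel₀ _ hD]
  have he₃ : e₃ = -(e₁ + e₂) := by linear_combination hsum
  constructor
  · rw [key, key]
    congr 1
    rw [hg₂, he₃]
    ring
  · rw [key, key]
    congr 1
    rw [hg₂, he₃]
    ring
end
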